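/- Let n ≥ 2 be even, and suppose c : (ZMod n)² → ZMod n is a proper n-coloring of T_n. Then for each color C, the color class of C is a transversal of the cyclic Latin square: it contains exactly one cell in each row, one in each column, and one of each label. But the cyclic Latin square of even order has no transversal, a contradiction; hence no proper n-coloring of T_n exists for even n. -/

import Mathlib

/-!
In a proper `n`-colouring of `T_n`, every row, column and label line is an `n`-clique, so it
meets each colour class exactly once: each colour class is a transversal. A transversal is the
graph of a permutation `f` with `i ↦ i + f i` also a permutation, so summing `i + f i` over all
rows gives `∑ x + ∑ x = ∑ x`, i.e. `∑ x = 0`. In `ZMod (2k)` however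
`∑ x = k(2k - 1) = -k ≠ 0`.
-/

/-- The cyclic Latin square graph of order `n`. -/
def cyclicLatinSquareGraph (n : ℕ) : SimpleGraph (ZMod n × ZMod n) :=
  SimpleGraph.fromRel (fun x y => x.1 = y.1 ∨ x.2 = y.2 ∨ x.1 + x.2 = y.1 + y.2)

open Finset Function

/-- A transversal of the Latin square `(i, j) ↦ i + j` over `G`. -/
def IsAddTransversal {G : Type*} [Add G] (S : Set (G × G)) : Prop :=
  (∀ i, ∃! j, (i, j) ∈ S) ∧ (∀ j, ∃! i, (i, j) ∈ S) ∧
    (∀ L, ∃! p, p ∈ S ∧ p.1 + p.2 = L)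

theorem sum_univ_eq_zero_of_injective_add_self {G : Type*} [AddCommGroup G] [Fintype G]
    {f : G → G} (hf : Injective f) (hf' : Injective fun x => x + f x) : ∑ x : G, x = 0 := by
  have hsum_f : ∑ x, f x = ∑ x : G, x := (Finite.injective_iff_bijective.mp hf).sum_comp id
  have hsum_add : ∑ x, (x + f x) = ∑ x : G, x :=
    (Finite.injective_iff_bijective.mp hf').sum_comp id
  rwa [sum_add_distrib, hsum_f, add_eq_left] at hsum_add

theorem IsAddTransversal.sum_univ_eq_zero {G : Type*} [AddCommGroup G] [Fintype G]
    {S : Set (G × G)} (hS : IsAddTransversal S) : ∑ x : G, x = 0 := by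
  obtain ⟨hrow, hcol, hlabel⟩ := hS
  choose f hfS _ using hrow
  refine sum_univ_eq_zero_of_injective_add_self (f := f) (fun i i' h => ?_) (fun i i' h => ?_)
  · exact (hcol (f i)).unique (hfS i) (h ▸ hfS i')
  · exact congrArg Prod.fst <| (hlabel (i + f i)).unique ⟨hfS i, rfl⟩ ⟨hfS i', h.symm⟩

theorem ZMod.sum_univ_eq_sum_range (n : ℕ) [NeZero n] :
    ∑ x : ZMod n, x = ∑ i ∈ range n, (i : ZMod n) :=
  sum_nbij' val Nat.cast (by simp [val_lt]) (by simp) (by simp)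
    (fun _ hi => val_cast_of_lt (mem_range.1 hi)) (by simp)

theorem ZMod.sum_univ_ne_zero_of_even {n : ℕ} [NeZero n] (hn : Even n) :
    ∑ x : ZMod n, x ≠ 0 := by
  obtain ⟨k, rfl⟩ := hn
  have hk : 0 < k := by have := NeZero.ne (k + k); omega
  have gauss : ∑ i ∈ range (k + k), i = k * (k + k - 1) := by
    nlinarith [sum_range_id_mul_two (k + k)]
  have hsum : ∑ x : ZMod (k + k), x = -k := by
    rw [sum_univ_eq_sum_range, ← Nat.cast_sum, gauss, Nat.cast_mul, Nat.cast_sub (by omega),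
      natCast_self]
    ring
  rw [hsum, neg_ne_zero, Ne, natCast_eq_zero_iff]
  exact Nat.not_dvd_of_pos_of_lt hk (by omega)

theorem existsUnique_color_eq_of_pairwise_adj {V ι α : Type*} [Fintype ι] [Fintype α]
    {G : SimpleGraph V} {c : V → α} (hc : ∀ p q, G.Adj p q → c p ≠ c q) {g : ι → V}
    (hg : Pairwise fun a b => G.Adj (g a) (g b)) (hcard : Fintype.card ι = Fintype.card α)
    (C : α) : ∃! a, c (g a) = C := by
  have hinj : Injective (c ∘ g) := fun a b h => by_contra fun hab => hc _ _ (hg hab) h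
  exact (bijective_iff_existsUnique _).mp
    ((Fintype.bijective_iff_injective_and_card _).mpr ⟨hinj, hcard⟩) C

theorem cyclicLatinSquareGraph_adj_of_ne {n : ℕ} {p q : ZMod n × ZMod n} (hne : p ≠ q)
    (h : p.1 = q.1 ∨ p.2 = q.2 ∨ p.1 + p.2 = q.1 + q.2) :
    (cyclicLatinSquareGraph n).Adj p q :=
  ⟨hne, Or.inl h⟩

theorem isAddTransversal_colorClass {n : ℕ} [NeZero n] {c : ZMod n × ZMod n → Fin n}
    (hc : ∀ p q, (cyclicLatinSquareGraph n).Adj p q → c p ≠ c q) (C : Fin n) :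
    IsAddTransversal {p | c p = C} := by
  have hcard : Fintype.card (ZMod n) = Fintype.card (Fin n) := by simp
  refine ⟨fun i => ?_, fun j => ?_, fun L => ?_⟩
  · refine existsUnique_color_eq_of_pairwise_adj hc (g := fun j => (i, j))
      (fun a b hab => cyclicLatinSquareGraph_adj_of_ne ?_ (Or.inl rfl)) hcard C
    simpa using hab
  · refine existsUnique_color_eq_of_pairwise_adj hc (g := fun i => (i, j))
      (fun a b hab => cyclicLatinSquareGraph_adj_of_ne ?_ (Or.inr (Or.inl rfl))) hcard C
    simpa using hab
  · obtain ⟨a, ha, huniq⟩ := existsUnique_color_eq_of_pairwise_adj hc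
      (g := fun a => (a, L - a)) (fun a b hab => cyclicLatinSquareGraph_adj_of_ne
        (by simpa using hab) (by simp)) hcard C
    refine ⟨(a, L - a), ⟨ha, add_sub_cancel a L⟩, ?_⟩
    rintro ⟨x, y⟩ ⟨hxy, rfl⟩
    obtain rfl := huniq x (by simpa using hxy)
    simp

theorem even_no_n_coloring_via_transversal_general (n : ℕ) (heven : Even n)
    (c : ZMod n × ZMod n → Fin n)
    (hc : ∀ p q : ZMod n × ZMod n, (cyclicLatinSquareGraph n).Adj p q → c p ≠ c q) :
    (∀ C : Fin n,
      (∀ i : ZMod n, ∃! j : ZMod n, c (i, j) = C) ∧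
      (∀ j : ZMod n, ∃! i : ZMod n, c (i, j) = C) ∧
      (∀ L : ZMod n, ∃! p : ZMod n × ZMod n, c p = C ∧ p.1 + p.2 = L)) ∧ False := by
  have : NeZero n := ⟨(c 0).pos.ne'⟩
  have htransversal (C : Fin n) : IsAddTransversal {p | c p = C} :=
    isAddTransversal_colorClass hc C
  exact ⟨htransversal,
    ZMod.sum_univ_ne_zero_of_even heven (htransversal (c 0)).sum_univ_eq_zero⟩

theorem even_no_n_coloring_via_transversal (n : ℕ) (hn : 2 ≤ n) (heven : Even n)
    (c : ZMod n × ZMod n → Fin n)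
    (hc : ∀ p q : ZMod n × ZMod n, (cyclicLatinSquareGraph n).Adj p q → c p ≠ c q) :
    (∀ C : Fin n,
      (∀ i : ZMod n, ∃! j : ZMod n, c (i, j) = C) ∧
      (∀ j : ZMod n, ∃! i : ZMod n, c (i, j) = C) ∧
      (∀ L : ZMod n, ∃! p : ZMod n × ZMod n, c p = C ∧ p.1 + p.2 = L)) ∧ False :=
  even_no_n_coloring_via_transversal_general n heven c hc
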